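/- Fix an integer r ≥ 3, and for each n ≥ r set k_2(n) = ⌈(C(r,2)−1)·C(n,2) / t_{r−1}(n)⌉ and k_1(n) = k_2(n) − 1. Suppose that for every n ≥ r the following two statements hold for every k-weighting f on the complete graph K_n on vertex set [n] such that no r-clique of K_n has weight sequence bound (1, 2, …, C(r,2)): (i) if k = k_1(n), then Σ_e f(e) ≤ (C(r,2)−1)·C(n,2); (ii) if k = k_2(n), then Σ_e f(e) ≤ k·t_{r−1}(n). Then for every n ≥ r−1, every k ≥ C(r,2), and every rainbow K_r-free family (G_1, …, G_k) of simple graphs on [n], one has Σ_{i=1}^{k} |E(G_i)| ≤ max{ (C(r,2)−1)·C(n,2), k·t_{r−1}(n) }. -/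

import Mathlib

open Finset SimpleGraph

/-- `t_t(n)`: the number of edges of the Turán graph `T_t(n)`. -/
def turanE (t n : ℕ) : ℕ := (SimpleGraph.turanGraph n t).edgeFinset.card

/-- A family `G_1, …, G_k` of simple graphs on `[n]` is rainbow `K_r`-free. -/
def RainbowCliqueFree (n k r : ℕ) (G : Fin k → SimpleGraph (Fin n)) : Prop :=
  ¬ ∃ (S : Finset (Fin n)) (c : Sym2 (Fin n) → Fin k),
      S.card = r ∧
      Set.InjOn c {e : Sym2 (Fin n) | ¬ e.IsDiag ∧ ∀ v ∈ e, v ∈ S} ∧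
      ∀ u ∈ S, ∀ v ∈ S, u ≠ v → (G (c s(u, v))).Adj u v

/-- The `r`-clique `S` has weight sequence bound `(1, 2, …, C(r,2))` w.r.t. `f`: the
`C(r,2)` edges inside `S` can be enumerated `e_1, …, e_{C(r,2)}` with `f(e_i) ≥ i`. -/
def HasWSB (n r : ℕ) (f : Sym2 (Fin n) → ℕ) (S : Finset (Fin n)) : Prop :=
  ∃ g : Fin (r.choose 2) → Sym2 (Fin n),
    Function.Injective g ∧
    (∀ i, ¬ (g i).IsDiag ∧ ∀ v ∈ g i, v ∈ S) ∧
    ∀ i : Fin (r.choose 2), (i : ℕ) + 1 ≤ f (g i)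

/-- `k₂(n) = ⌈(C(r,2)−1)·C(n,2) / t_{r−1}(n)⌉`. -/
def kTwo (r n : ℕ) : ℕ :=
  ⌈(((r.choose 2 - 1) * n.choose 2 : ℕ) : ℚ) / ((turanE (r - 1) n : ℕ) : ℚ)⌉₊

/-!
Weight each edge of `K_n` by its multiplicity, the number of graphs of the family containing
it; the total weight is `Σ_i |E(G_i)|`. If a clique `S` had weight sequence bound
`(1, …, C(r,2))` under this weighting, the `i`-th edge of `S` would lie in at least `i` graphs,
so Hall's theorem would colour the edges of `S` by distinct graphs, a rainbow `K_r`. Hence the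
weighted hypotheses apply to the multiplicity weighting and to every weighting below it. For
`k < k₂(n)` hypothesis (i) applies directly. For `k ≥ k₂(n)`, hypothesis (ii) applied to the
truncation `min(w, k₂)` and to `k₂ · [w > k₂]` shows that the truncation has weight at most
`k₂ t` and that at most `t` edges exceed `k₂`, each by at most `k − k₂`. For `n = r − 1` the
Turán graph is complete and the trivial bound suffices.
-/

theorem Finset.card_filter_not_isDiag_sym2 {α : Type*} [DecidableEq α] (s : Finset α) :
    #{e ∈ s.sym2 | ¬ e.IsDiag} = (#s).choose 2 := by
  rw [sym2_eq_image, Sym2.filter_image_mk_not_isDiag, Sym2.card_image_offDiag]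

theorem Finset.exists_eq_of_injective_of_mem_sym2 {α : Type*} [DecidableEq α] {s : Finset α}
    {g : Fin ((#s).choose 2) → Sym2 α} (hg : Function.Injective g)
    (hmem : ∀ i, g i ∈ {e ∈ s.sym2 | ¬ e.IsDiag}) {e : Sym2 α}
    (he : e ∈ {e ∈ s.sym2 | ¬ e.IsDiag}) : ∃ i, g i = e := by
  have himage : univ.image g = {e ∈ s.sym2 | ¬ e.IsDiag} :=
    eq_of_subset_of_card_le (image_subset_iff.2 fun i _ => hmem i)
      (by rw [card_filter_not_isDiag_sym2, card_image_of_injective _ hg, card_univ,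
        Fintype.card_fin])
  rw [← himage] at he
  simpa using he

theorem Fin.exists_injective_mem_of_succ_le_card {α : Type*} [DecidableEq α] {m : ℕ}
    (A : Fin m → Finset α) (hA : ∀ i : Fin m, (i : ℕ) + 1 ≤ #(A i)) :
    ∃ c : Fin m → α, Function.Injective c ∧ ∀ i, c i ∈ A i := by
  refine (all_card_le_biUnion_card_iff_exists_injective A).1 fun s => ?_
  rcases s.eq_empty_or_nonempty with rfl | hs
  · simp
  calc #s ≤ #(Iic (s.max' hs)) := card_le_card fun i hi => mem_Iic.2 (s.le_max' i hi)
    _ = (s.max' hs : ℕ) + 1 := card_Iic _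
    _ ≤ #(A (s.max' hs)) := hA _
    _ ≤ #(s.biUnion A) := card_le_card (subset_biUnion_of_mem A (s.max'_mem hs))

theorem Finset.sum_le_mul_of_truncations {α : Type*} {s : Finset α} {w : α → ℕ} {k k₂ t : ℕ}
    (hw : ∀ a ∈ s, w a ≤ k) (hk : k₂ ≤ k) (hk₂ : 0 < k₂)
    (hbound : ∀ f : α → ℕ, (∀ a, f a ≤ w a) → (∀ a, f a ≤ k₂) → ∑ a ∈ s, f a ≤ k₂ * t) :
    ∑ a ∈ s, w a ≤ k * t := by
  classical
  have hheavy : #{a ∈ s | k₂ < w a} ≤ t := by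
    have h := hbound (fun a => if k₂ < w a then k₂ else 0)
      (fun a => by split_ifs <;> omega) (fun a => by split_ifs <;> omega)
    rw [sum_ite, sum_const_zero, add_zero, sum_const, smul_eq_mul, mul_comm] at h
    exact Nat.le_of_mul_le_mul_left h hk₂
  have htrunc := hbound (fun a => min (w a) k₂) (fun _ => min_le_left _ _)
    (fun _ => min_le_right _ _)
  calc ∑ a ∈ s, w a
      ≤ ∑ a ∈ s, (min (w a) k₂ + if k₂ < w a then k - k₂ else 0) :=
        sum_le_sum fun a ha => by have := hw a ha; split_ifs <;> omega
    _ = ∑ a ∈ s, min (w a) k₂ + #{a ∈ s | k₂ < w a} * (k - k₂) := by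
        rw [sum_add_distrib, sum_ite, sum_const_zero, add_zero, sum_const, smul_eq_mul]
    _ ≤ k₂ * t + t * (k - k₂) := add_le_add htrunc (Nat.mul_le_mul_right _ hheavy)
    _ = k * t := by rw [mul_comm t, ← add_mul, Nat.add_sub_cancel' hk]

theorem turanE_pos {t n : ℕ} (ht : 2 ≤ t) (hn : 2 ≤ n) : 0 < turanE t n := by
  have hadj : (turanGraph n t).Adj ⟨0, by omega⟩ ⟨1, by omega⟩ := by
    change 0 % t ≠ 1 % t
    rw [Nat.zero_mod, Nat.mod_eq_of_lt (by omega)]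
    omega
  exact card_pos.2 ⟨_, mem_edgeFinset.2 ((mem_edgeSet _).2 hadj)⟩

theorem turanE_of_le {t n : ℕ} (h : n ≤ t) : turanE t n = n.choose 2 := by
  unfold turanE
  convert card_edgeFinset_top_eq_card_choose_two (V := Fin n)
  · exact turanGraph_eq_top.2 (Or.inr h)
  · exact (Fintype.card_fin n).symm

theorem kTwo_pos {r n : ℕ} (hr : 3 ≤ r) (hn : r ≤ n) : 0 < kTwo r n := by
  have hC : 3 ≤ r.choose 2 := (Nat.choose_le_choose 2 hr).trans_eq' rfl
  have hnum : 0 < (r.choose 2 - 1) * n.choose 2 :=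
    Nat.mul_pos (by omega) (Nat.choose_pos (by omega))
  have hden : 0 < turanE (r - 1) n := turanE_pos (by omega) (by omega)
  unfold kTwo
  rw [Nat.ceil_pos]
  positivity

section edgeMultiplicity

variable {ι V : Type*} [Fintype ι]

open Classical in
noncomputable def edgeMultiplicity (G : ι → SimpleGraph V) (e : Sym2 V) : ℕ :=
  #{i | e ∈ (G i).edgeSet}

open Classical in
theorem edgeMultiplicity_le (G : ι → SimpleGraph V) (e : Sym2 V) :
    edgeMultiplicity G e ≤ Fintype.card ι :=
  card_filter_le _ _

open Classical in
theorem sum_ncard_edgeSet_eq_sum_edgeMultiplicity [Fintype V] [DecidableEq V]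
    (G : ι → SimpleGraph V) :
    ∑ i, (G i).edgeSet.ncard = ∑ e ∈ (⊤ : SimpleGraph V).edgeFinset, edgeMultiplicity G e := by
  have hcard (i : ι) :
      (G i).edgeSet.ncard = #{e ∈ (⊤ : SimpleGraph V).edgeFinset | e ∈ (G i).edgeSet} := by
    rw [Set.ncard_eq_toFinset_card']
    congr 1
    ext e
    simpa using fun h => (G i).not_isDiag_of_mem_edgeSet h
  simp only [hcard, card_filter, edgeMultiplicity]
  exact sum_comm

end edgeMultiplicity

theorem HasWSB.mono {n r : ℕ} {f f' : Sym2 (Fin n) → ℕ} {S : Finset (Fin n)}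
    (hw : HasWSB n r f S) (h : ∀ e, f e ≤ f' e) : HasWSB n r f' S :=
  let ⟨g, hg_inj, hg_mem, hg_le⟩ := hw
  ⟨g, hg_inj, hg_mem, fun i => (hg_le i).trans (h (g i))⟩

open Classical in
theorem RainbowCliqueFree.not_hasWSB_edgeMultiplicity {n k r : ℕ} (hr : 2 ≤ r)
    {G : Fin k → SimpleGraph (Fin n)} (hG : RainbowCliqueFree n k r G) {S : Finset (Fin n)}
    (hS : #S = r) : ¬ HasWSB n r (edgeMultiplicity G) S := by
  subst hS
  rintro ⟨g, hg_inj, hg_mem, hg_le⟩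
  obtain ⟨c, hc_inj, hc_mem⟩ :=
    Fin.exists_injective_mem_of_succ_le_card (fun i => {j | g i ∈ (G j).edgeSet}) hg_le
  have hedge (e : Sym2 (Fin n)) :
      e ∈ {e ∈ S.sym2 | ¬ e.IsDiag} ↔ ¬ e.IsDiag ∧ ∀ v ∈ e, v ∈ S := by
    rw [mem_filter, mem_sym2_iff, and_comm]
  have hcover {e : Sym2 (Fin n)} (he : ¬ e.IsDiag ∧ ∀ v ∈ e, v ∈ S) : ∃ i, g i = e :=
    exists_eq_of_injective_of_mem_sym2 hg_inj (fun i => (hedge _).2 (hg_mem i)) ((hedge e).2 he)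
  have : Nonempty (Fin ((#S).choose 2)) := ⟨⟨0, Nat.choose_pos hr⟩⟩
  refine hG ⟨S, c ∘ Function.invFun g, rfl, fun e₁ he₁ e₂ he₂ h => ?_, fun u hu v hv huv => ?_⟩
  · rw [← Function.invFun_eq (hcover he₁), ← Function.invFun_eq (hcover he₂), hc_inj h]
  · have huv' : ∃ i, g i = s(u, v) :=
      hcover ⟨by simpa using huv, by simp [or_imp, forall_and, hu, hv]⟩
    simpa [Function.invFun_eq huv'] using hc_mem (Function.invFun g s(u, v))

/-- If for every `n ≥ r` the two weighted bounds hold (for `k = k₁(n)` and `k = k₂(n)`),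
then for every `n ≥ r−1`, `k ≥ C(r,2)` and every rainbow `K_r`-free family on `[n]`,
`Σ_i |E(G_i)| ≤ max{(C(r,2)−1)·C(n,2), k·t_{r−1}(n)}`. -/
theorem weighted_implies_rainbow (r : ℕ) (hr : 3 ≤ r)
    (hweighted : ∀ n : ℕ, r ≤ n → ∀ k : ℕ, ∀ f : Sym2 (Fin n) → ℕ,
      (∀ e : Sym2 (Fin n), ¬ e.IsDiag → f e ≤ k) →
      (∀ S : Finset (Fin n), S.card = r → ¬ HasWSB n r f S) →
      (k = kTwo r n - 1 →
        ∑ e ∈ (⊤ : SimpleGraph (Fin n)).edgeFinset, f e ≤ (r.choose 2 - 1) * n.choose 2) ∧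
      (k = kTwo r n →
        ∑ e ∈ (⊤ : SimpleGraph (Fin n)).edgeFinset, f e ≤ k * turanE (r - 1) n)) :
    ∀ n : ℕ, r - 1 ≤ n → ∀ k : ℕ, r.choose 2 ≤ k →
      ∀ G : Fin k → SimpleGraph (Fin n), RainbowCliqueFree n k r G →
        ∑ i, (G i).edgeSet.ncard ≤
          max ((r.choose 2 - 1) * n.choose 2) (k * turanE (r - 1) n) := by
  intro n hn k _ G hG
  rw [sum_ncard_edgeSet_eq_sum_edgeMultiplicity]
  have hmult (e : Sym2 (Fin n)) : edgeMultiplicity G e ≤ k :=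
    (edgeMultiplicity_le G e).trans_eq (Fintype.card_fin k)
  rcases (show n = r - 1 ∨ r ≤ n by omega) with rfl | hrn
  · refine le_max_of_le_right ?_
    calc ∑ e ∈ (⊤ : SimpleGraph (Fin (r - 1))).edgeFinset, edgeMultiplicity G e
        ≤ #(⊤ : SimpleGraph (Fin (r - 1))).edgeFinset • k :=
          sum_le_card_nsmul _ _ _ fun e _ => hmult e
      _ = k * turanE (r - 1) (r - 1) := by
        rw [turanE_of_le le_rfl, card_edgeFinset_top_eq_card_choose_two, Fintype.card_fin,
          smul_eq_mul, mul_comm]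
  have hfree (f : Sym2 (Fin n) → ℕ) (hf : ∀ e, f e ≤ edgeMultiplicity G e) (S : Finset (Fin n))
      (hS : #S = r) : ¬ HasWSB n r f S :=
    fun hw => hG.not_hasWSB_edgeMultiplicity (by omega) hS (hw.mono hf)
  by_cases hk₂ : k < kTwo r n
  · exact le_max_of_le_left ((hweighted n hrn (kTwo r n - 1) _
      (fun e _ => (hmult e).trans (by omega)) (hfree _ fun _ => le_rfl)).1 rfl)
  · exact le_max_of_le_right (sum_le_mul_of_truncations (fun e _ => hmult e) (not_lt.1 hk₂)
      (kTwo_pos hr hrn) fun f hfw hfk =>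
        (hweighted n hrn _ f (fun e _ => hfk e) (hfree f hfw)).2 rfl)
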